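/- In the formal power series ring ℚ[[x,y]], Σ_{k=0}^{∞} Σ_{m=0}^{∞} ( Σ_{i=0}^{min(k,m)} (i!)² · S_{k+1,i+1} · S_{m+1,i+1} ) · x^k y^m / (k! m!) = e^{x+y} / (e^x + e^y − e^{x+y}), where S_{a,b} are the Stirling numbers of the second kind. (The inner sum Σ_i (i!)² S_{k+1,i+1} S_{m+1,i+1} is the number of elements of the Bruhat interval [id,w] in S_{k+m}, where w is the maximal element of A_{k+m−1}^{S∖{s_k}}.) -/

import Mathlib

open Finset

/-- A board: the set of one-entries (cells) of a zero-one matrix, as (row, column) pairs. -/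
abbrev Board := Finset (ℕ × ℕ)

/-- The full `m × n` grid of cells. -/
def grid (m n : ℕ) : Board := Finset.range m ×ˢ Finset.range n

/-- The (non-taking) rook configurations on the board `A` with `k` rooks. -/
def rookConfigs (A : Board) (k : ℕ) : Finset Board :=
  A.powerset.filter fun C =>
    C.card = k ∧ ∀ c ∈ C, ∀ c' ∈ C, c ≠ c' → c.1 ≠ c'.1 ∧ c.2 ≠ c'.2

/-- `invStat m n C`: the number of (not necessarily positive) cells of an `m × n` matrix
having no rook of the configuration `C` weakly to the right in the same row nor weakly
below in the same column. -/
def invStat (m n : ℕ) (C : Board) : ℕ :=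
  ((grid m n).filter fun a =>
    (∀ c ∈ C, c.1 = a.1 → c.2 < a.2) ∧ (∀ c ∈ C, c.2 = a.2 → c.1 < a.1)).card

/-- The `k`-th `q`-rook number of a board `A` of ambient matrix size `m × n`. -/
def qRook {F : Type*} [CommSemiring F] (q : F) (m n : ℕ) (A : Board) (k : ℕ) : F :=
  ∑ C ∈ rookConfigs A k, q ^ invStat m n C

/-- The `q`-analogue `[x]_q = 1 + q + ⋯ + q^(x-1)`. -/
def qInt {F : Type*} [CommSemiring F] (q : F) (x : ℕ) : F := ∑ i ∈ Finset.range x, q ^ i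

/-- The `q`-factorial `[n]!_q = [1]_q [2]_q ⋯ [n]_q`. -/
def qFact {F : Type*} [CommSemiring F] (q : F) (n : ℕ) : F := ∏ i ∈ Finset.range n, qInt q (i + 1)

/-- The `q`-Stirling numbers `S_{n,k}(q)` of Garsia and Remmel. -/
def qStirling {F : Type*} [CommSemiring F] (q : F) : ℕ → ℕ → F
  | 0, 0 => 1
  | 0, _ + 1 => 0
  | n + 1, k => (if k = 0 then 0 else q ^ (k - 1) * qStirling q n (k - 1)) + qInt q k * qStirling q n k

/-- Stirling numbers of the second kind. -/
def stirling2 : ℕ → ℕ → ℕ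
  | 0, 0 => 1
  | 0, _ + 1 => 0
  | n + 1, k => (if k = 0 then 0 else stirling2 n (k - 1)) + k * stirling2 n k

/-- The board `A` covers the rook configuration of the permutation `π`
(a rook at `(i, π i)` for every row `i`, zero-indexed). -/
def Covers {n : ℕ} (A : Board) (π : Equiv.Perm (Fin n)) : Prop :=
  ∀ i : Fin n, ((i : ℕ), (π i : ℕ)) ∈ A

/-- `bruhatRank π i j` is the number of rooks of `π` weakly north-east of cell `(i,j)`,
i.e. `|{a ≤ i : π a ≥ j}|`. -/
def bruhatRank {n : ℕ} (π : Equiv.Perm (Fin n)) (i j : Fin n) : ℕ :=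
  (Finset.univ.filter fun a : Fin n => a ≤ i ∧ j ≤ π a).card

/-- Bruhat order on the symmetric group, via the standard (Ehresmann) rank criterion. -/
def BruhatLE {n : ℕ} (u w : Equiv.Perm (Fin n)) : Prop :=
  ∀ i j : Fin n, bruhatRank u i j ≤ bruhatRank w i j


instance {n : ℕ} (A : Board) (π : Equiv.Perm (Fin n)) : Decidable (Covers A π) :=
  inferInstanceAs (Decidable (∀ i : Fin n, ((i : ℕ), (π i : ℕ)) ∈ A))

instance {n : ℕ} (u w : Equiv.Perm (Fin n)) : Decidable (BruhatLE u w) :=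
  inferInstanceAs (Decidable (∀ i j : Fin n, bruhatRank u i j ≤ bruhatRank w i j))

/-- The number of inversions of a permutation (= its Coxeter length). -/
def inversions {n : ℕ} (π : Equiv.Perm (Fin n)) : ℕ :=
  (Finset.univ.filter fun p : Fin n × Fin n => p.1 < p.2 ∧ π p.2 < π p.1).card

/-- A right-aligned Ferrers matrix inside the `n × n` grid: every one-entry has one-entries
(weakly) to its right in the grid and above it. -/
def IsRightFerrers (n : ℕ) (A : Board) : Prop :=
  A ⊆ grid n n ∧ ∀ i j i' j' : ℕ, (i, j) ∈ A → i' ≤ i → j ≤ j' → j' < n → (i', j') ∈ A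

/-- A left-aligned Ferrers matrix inside the `n × n` grid. -/
def IsLeftFerrers (n : ℕ) (A : Board) : Prop :=
  A ⊆ grid n n ∧ ∀ i j i' j' : ℕ, (i, j) ∈ A → i' ≤ i → j' ≤ j → (i', j') ∈ A

/-- A right-aligned skew Ferrers matrix: an entrywise difference `λ - μ` of right-aligned
Ferrers matrices with `μ ≤ λ`. -/
def IsRightSkewFerrers (n : ℕ) (B : Board) : Prop :=
  ∃ L M : Board, IsRightFerrers n L ∧ IsRightFerrers n M ∧ M ⊆ L ∧ B = L \ M

/-- A left-aligned skew Ferrers matrix. -/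
def IsLeftSkewFerrers (n : ℕ) (B : Board) : Prop :=
  ∃ L M : Board, IsLeftFerrers n L ∧ IsLeftFerrers n M ∧ M ⊆ L ∧ B = L \ M

/-- `H` is the right hull of `π`: the smallest right-aligned skew Ferrers matrix covering `π`. -/
def IsRightHull {n : ℕ} (π : Equiv.Perm (Fin n)) (H : Board) : Prop :=
  IsRightSkewFerrers n H ∧ Covers H π ∧
    ∀ B : Board, IsRightSkewFerrers n B → Covers B π → H ⊆ B

/-- `H` is the left hull of `π`: the smallest left-aligned skew Ferrers matrix covering `π`. -/
def IsLeftHull {n : ℕ} (π : Equiv.Perm (Fin n)) (H : Board) : Prop :=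
  IsLeftSkewFerrers n H ∧ Covers H π ∧
    ∀ B : Board, IsLeftSkewFerrers n B → Covers B π → H ⊆ B

/-- `π` contains the pattern `σ`. -/
def ContainsPattern {n m : ℕ} (π : Equiv.Perm (Fin n)) (σ : Equiv.Perm (Fin m)) : Prop :=
  ∃ f : Fin m → Fin n, StrictMono f ∧ ∀ a b : Fin m, σ a < σ b ↔ π (f a) < π (f b)

/-- The pattern 4231 (one-line notation, here zero-indexed). -/
def p4231 : Equiv.Perm (Fin 4) := ⟨![3,1,2,0], ![3,1,2,0], by decide, by decide⟩
/-- The pattern 35142. -/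
def p35142 : Equiv.Perm (Fin 5) := ⟨![2,4,0,3,1], ![2,4,0,3,1], by decide, by decide⟩
/-- The pattern 42513. -/
def p42513 : Equiv.Perm (Fin 5) := ⟨![3,1,4,0,2], ![3,1,4,0,2], by decide, by decide⟩
/-- The pattern 351624. -/
def p351624 : Equiv.Perm (Fin 6) := ⟨![2,4,0,5,1,3], ![2,4,0,5,1,3], by decide, by decide⟩

/-- `π` avoids the four patterns 4231, 35142, 42513 and 351624. -/
def AvoidsThePatterns {n : ℕ} (π : Equiv.Perm (Fin n)) : Prop :=
  ¬ ContainsPattern π p4231 ∧ ¬ ContainsPattern π p35142 ∧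
    ¬ ContainsPattern π p42513 ∧ ¬ ContainsPattern π p351624

/-- Rotating an `m × n` board by 180 degrees. -/
def rot180 (m n : ℕ) (A : Board) : Board := A.image fun c => (m - 1 - c.1, n - 1 - c.2)

/-- Flipping an `m`-row board upside down. -/
def flipud (m : ℕ) (A : Board) : Board := A.image fun c => (m - 1 - c.1, c.2)

/-- The block matrix `B # A` with `B` (of size `nB × nB`) in the top-left corner, `A`
(of size `mA × mA`) in the bottom-right corner, and all-ones off-diagonal blocks. -/
def blockSharp (nB mA : ℕ) (B A : Board) : Board :=
  B ∪ Finset.range nB ×ˢ Finset.Ico nB (nB + mA) ∪ Finset.Ico nB (nB + mA) ×ˢ Finset.range nB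
    ∪ A.image fun c => (c.1 + nB, c.2 + nB)

/-- The 180-degree rotation of a permutation of `Fin n`: `π^↻ (i) = n - 1 - π (n - 1 - i)`. -/
def rot180Perm {n : ℕ} (π : Equiv.Perm (Fin n)) : Equiv.Perm (Fin n) :=
  (Fin.revPerm.trans π).trans Fin.revPerm

/-- The statistic `neg(π) = |{i ∈ [n+1, 2n] : π i ≤ n}|` (one-indexed) on `S_{2n}`. -/
def negStat (n : ℕ) (π : Equiv.Perm (Fin (2 * n))) : ℕ :=
  (Finset.univ.filter fun i : Fin (2 * n) => n ≤ (i : ℕ) ∧ (π i : ℕ) < n).card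

/-- `RB^M (q, t) = Σ_{π ∈ 𝔖ₙᴮ ∩ 𝔖(M)} q^{inv π} t^{neg π}` over rotationally symmetric
permutations of `S_{2n}` covered by the `2n × 2n` board `M`. -/
def RB {F : Type*} [CommSemiring F] (q t : F) (n : ℕ) (M : Board) : F :=
  ∑ π ∈ Finset.univ.filter fun π : Equiv.Perm (Fin (2 * n)) => rot180Perm π = π ∧ Covers M π,
    q ^ inversions π * t ^ negStat n π

/-- The triangular board `T_m` with ones on and above the secondary diagonal. -/
def Tboard (m : ℕ) : Board := (grid m m).filter fun c => c.1 + c.2 < m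

/-- The power series `e^x` in `ℚ[[x,y]]`. -/
def expX : MvPowerSeries (Fin 2) ℚ :=
  fun d => if d 1 = 0 then 1 / (Nat.factorial (d 0) : ℚ) else 0
/-- The power series `e^y` in `ℚ[[x,y]]`. -/
def expY : MvPowerSeries (Fin 2) ℚ :=
  fun d => if d 0 = 0 then 1 / (Nat.factorial (d 1) : ℚ) else 0
/-- The power series `e^(x+y)` in `ℚ[[x,y]]`. -/
def expXY : MvPowerSeries (Fin 2) ℚ :=
  fun d => 1 / ((Nat.factorial (d 0) : ℚ) * (Nat.factorial (d 1) : ℚ))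

/-! Multiplying an exponential generating function by `e^x` is the binomial transform in the
first index, and `∑ₐ C(k,a) S(a+1,i+1) = S(k+1,i+1) + (i+1) S(k+1,i+2)` (the coefficient form
of `eˣ · eˣ(eˣ-1)^i/i! = eˣ(eˣ-1)^i/i! + (i+1) · eˣ(eˣ-1)^(i+1)/(i+1)!`). Writing
`g i = (i!)² S(k+1,i+1) S(m+1,i+1)`, the coefficient of `xᵏ yᵐ/(k! m!)` in the left-hand side
times `eˣ + eʸ - eˣeʸ` is therefore the telescoping sum `∑ᵢ (g i - g (i+1)) = g 0 = 1`, which is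
the coefficient of `e^(x+y)`. -/

open scoped Nat
open MvPowerSeries

theorem stirling2_eq_stirlingSecond : stirling2 = Nat.stirlingSecond := by
  funext n k
  induction n generalizing k with
  | zero => cases k <;> rfl
  | succ n ih =>
    cases k with
    | zero => simp [stirling2]
    | succ k => simp [stirling2, Nat.stirlingSecond_succ_succ, ih]; ring

namespace Nat

theorem sum_range_choose_mul_stirlingSecond (n k : ℕ) :
    ∑ i ∈ range (n + 1), n.choose i * stirlingSecond i k = stirlingSecond (n + 1) (k + 1) := by
  induction n generalizing k with
  | zero => simp [stirlingSecond_succ_succ]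
  | succ n ih =>
    have pascal := Finset.sum_choose_succ_mul (R := ℕ) (fun i _ => stirlingSecond i k) n
    simp only [Nat.cast_id] at pascal
    rw [pascal, ih]
    cases k with
    | zero => simp [stirlingSecond_one_right]
    | succ k =>
      simp only [stirlingSecond_succ_succ, mul_add, Finset.sum_add_distrib, mul_left_comm _ (k + 1),
        ← Finset.mul_sum, ih]
      ring

theorem sum_range_choose_mul_stirlingSecond_succ (n k : ℕ) :
    ∑ i ∈ range (n + 1), n.choose i * stirlingSecond (i + 1) (k + 1) =
      stirlingSecond (n + 1) (k + 1) + (k + 1) * stirlingSecond (n + 1) (k + 2) := by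
  simp only [stirlingSecond_succ_succ _ k, mul_add, Finset.sum_add_distrib, mul_left_comm _ (k + 1),
    ← Finset.mul_sum, sum_range_choose_mul_stirlingSecond]
  ring

end Nat

theorem stirling2_eq_zero_of_lt {n k : ℕ} (h : n < k) : stirling2 n k = 0 := by
  rw [stirling2_eq_stirlingSecond, Nat.stirlingSecond_eq_zero_of_lt h]

theorem sum_choose_mul_sum_mul_stirling2 (n : ℕ) (s : Finset ℕ) (v : ℕ → ℚ) :
    ∑ a ∈ range (n + 1), (n.choose a : ℚ) * ∑ i ∈ s, v i * stirling2 (a + 1) (i + 1) =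
      ∑ i ∈ s, v i * (stirling2 (n + 1) (i + 1) + (i + 1) * stirling2 (n + 1) (i + 2)) := by
  simp_rw [Finset.mul_sum]
  rw [Finset.sum_comm]
  refine Finset.sum_congr rfl fun i _ => ?_
  have h := congrArg (Nat.cast : ℕ → ℚ) (Nat.sum_range_choose_mul_stirlingSecond_succ n i)
  push_cast at h
  rw [stirling2_eq_stirlingSecond, ← h, Finset.mul_sum]
  exact Finset.sum_congr rfl fun a _ => by ring

noncomputable def bidegree (a b : ℕ) : Fin 2 →₀ ℕ := Finsupp.single 0 a + Finsupp.single 1 b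

@[simp] theorem bidegree_apply_zero (a b : ℕ) : bidegree a b 0 = a := by simp [bidegree]

@[simp] theorem bidegree_apply_one (a b : ℕ) : bidegree a b 1 = b := by simp [bidegree]

theorem bidegree_apply_zero_apply_one (d : Fin 2 →₀ ℕ) : bidegree (d 0) (d 1) = d := by
  ext i; fin_cases i <;> simp

theorem MvPowerSeries.coeff_mul_fin_two {R : Type*} [CommSemiring R] (f g : MvPowerSeries (Fin 2) R)
    (d : Fin 2 →₀ ℕ) :
    coeff d (f * g) = ∑ p ∈ antidiagonal (d 0), ∑ q ∈ antidiagonal (d 1),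
      coeff (bidegree p.1 q.1) f * coeff (bidegree p.2 q.2) g := by
  rw [coeff_mul, ← Finset.sum_product']
  refine Finset.sum_nbij' (fun p => ((p.1 0, p.2 0), (p.1 1, p.2 1)))
    (fun pq => (bidegree pq.1.1 pq.2.1, bidegree pq.1.2 pq.2.2)) ?_ ?_ ?_ ?_ ?_
  · rintro ⟨u, v⟩ h
    rw [HasAntidiagonal.mem_antidiagonal] at h
    simp [← h]
  · rintro ⟨⟨a, a'⟩, ⟨b, b'⟩⟩ h
    simp only [mem_product, HasAntidiagonal.mem_antidiagonal] at h
    rw [HasAntidiagonal.mem_antidiagonal, ← bidegree_apply_zero_apply_one d, ← h.1, ← h.2]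
    ext i; fin_cases i <;> simp
  · rintro ⟨u, v⟩ _
    simp [bidegree_apply_zero_apply_one]
  · rintro ⟨⟨a, a'⟩, ⟨b, b'⟩⟩ _
    simp
  · rintro ⟨u, v⟩ _
    simp [bidegree_apply_zero_apply_one]

theorem sum_antidiagonal_div_factorial_mul_factorial (n : ℕ) (f : ℕ → ℚ) :
    ∑ p ∈ antidiagonal n, f p.1 / (p.1 ! * p.2 !) =
      (∑ a ∈ range (n + 1), n.choose a * f a) / n ! := by
  rw [Nat.sum_antidiagonal_eq_sum_range_succ_mk, Finset.sum_div]
  refine Finset.sum_congr rfl fun a ha => ?_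
  have hle : a ≤ n := Nat.lt_succ_iff.mp (mem_range.mp ha)
  have hchoose : (n.choose a : ℚ) ≠ 0 := by exact_mod_cast (Nat.choose_pos hle).ne'
  have hfac : (n.choose a * a ! * (n - a)! : ℚ) = n ! := by
    exact_mod_cast Nat.choose_mul_factorial_mul_factorial hle
  rw [← hfac]
  field_simp

def egf₂ (c : ℕ → ℕ → ℚ) : MvPowerSeries (Fin 2) ℚ := fun d => c (d 0) (d 1) / ((d 0)! * (d 1)!)

@[simp] theorem coeff_egf₂ (c : ℕ → ℕ → ℚ) (d : Fin 2 →₀ ℕ) :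
    coeff d (egf₂ c) = c (d 0) (d 1) / ((d 0)! * (d 1)!) := rfl

theorem expX_eq_egf₂ : expX = egf₂ fun _ m => if m = 0 then 1 else 0 := by
  ext d
  by_cases h : d 1 = 0 <;> simp [coeff_apply, expX, egf₂, h]

theorem expY_eq_egf₂ : expY = egf₂ fun k _ => if k = 0 then 1 else 0 := by
  ext d
  by_cases h : d 0 = 0 <;> simp [coeff_apply, expY, egf₂, h]

theorem expXY_eq_egf₂ : expXY = egf₂ fun _ _ => 1 := rfl

theorem egf₂_mul_expX (c : ℕ → ℕ → ℚ) :
    egf₂ c * expX = egf₂ fun k m => ∑ a ∈ range (k + 1), k.choose a * c a m := by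
  ext d
  rw [coeff_mul_fin_two, coeff_egf₂, expX_eq_egf₂]
  simp only [coeff_egf₂, bidegree_apply_zero, bidegree_apply_one]
  have hrow : ∀ p : ℕ × ℕ, ∑ q ∈ antidiagonal (d 1),
      c p.1 q.1 / (p.1 ! * q.1 !) * ((if q.2 = 0 then 1 else 0) / (p.2 ! * q.2 !)) =
        (c p.1 (d 1) / (d 1)!) / (p.1 ! * p.2 !) := by
    intro p
    rw [Finset.sum_eq_single_of_mem (d 1, 0) (by simp)]
    · simp only [if_pos, Nat.factorial_zero, Nat.cast_one, mul_one]
      ring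
    · rintro ⟨b, b'⟩ hq hne
      have hb' : b' ≠ 0 := by
        rintro rfl
        exact hne (by simpa using hq)
      simp [hb']
  rw [Finset.sum_congr rfl fun p _ => hrow p,
    sum_antidiagonal_div_factorial_mul_factorial (d 0) fun a => c a (d 1) / (d 1)!,
    Finset.sum_div, Finset.sum_div]
  refine Finset.sum_congr rfl fun a _ => ?_
  ring

theorem egf₂_mul_expY (c : ℕ → ℕ → ℚ) :
    egf₂ c * expY = egf₂ fun k m => ∑ b ∈ range (m + 1), m.choose b * c k b := by
  ext d
  rw [coeff_mul_fin_two, coeff_egf₂, expY_eq_egf₂, Finset.sum_comm]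
  simp only [coeff_egf₂, bidegree_apply_zero, bidegree_apply_one]
  have hcol : ∀ q : ℕ × ℕ, ∑ p ∈ antidiagonal (d 0),
      c p.1 q.1 / (p.1 ! * q.1 !) * ((if p.2 = 0 then 1 else 0) / (p.2 ! * q.2 !)) =
        (c (d 0) q.1 / (d 0)!) / (q.1 ! * q.2 !) := by
    intro q
    rw [Finset.sum_eq_single_of_mem (d 0, 0) (by simp)]
    · simp only [if_pos, Nat.factorial_zero, Nat.cast_one, one_mul]
      ring
    · rintro ⟨a, a'⟩ hp hne
      have ha' : a' ≠ 0 := by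
        rintro rfl
        exact hne (by simpa using hp)
      simp [ha']
  rw [Finset.sum_congr rfl fun q _ => hcol q,
    sum_antidiagonal_div_factorial_mul_factorial (d 1) fun b => c (d 0) b / (d 0)!,
    Finset.sum_div, Finset.sum_div]
  refine Finset.sum_congr rfl fun b _ => ?_
  ring

theorem expX_mul_expY : expX * expY = expXY := by
  rw [expX_eq_egf₂, egf₂_mul_expY, expXY_eq_egf₂]
  ext d
  simp

def stirlingProductSum (k m : ℕ) : ℚ :=
  ∑ i ∈ range (min k m + 1), (i ! : ℚ) ^ 2 * stirling2 (k + 1) (i + 1) * stirling2 (m + 1) (i + 1)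

theorem stirlingProductSum_eq_sum_range {k m N : ℕ} (hN : min k m < N) :
    stirlingProductSum k m = ∑ i ∈ range N,
      (i ! : ℚ) ^ 2 * stirling2 (k + 1) (i + 1) * stirling2 (m + 1) (i + 1) := by
  refine Finset.sum_subset (range_subset_range.mpr hN) fun i _ hi => ?_
  have hi' : k < i ∨ m < i := by
    rw [mem_range, not_lt] at hi
    omega
  rcases hi' with h | h <;> simp [stirling2_eq_zero_of_lt (Nat.succ_lt_succ h)]

theorem sum_range_stirling_telescope (k m : ℕ) :
    ∑ i ∈ range (min k m + 1),
      ((i ! : ℚ) ^ 2 * stirling2 (m + 1) (i + 1) *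
          (stirling2 (k + 1) (i + 1) + (i + 1) * stirling2 (k + 1) (i + 2)) +
        (i ! : ℚ) ^ 2 * stirling2 (k + 1) (i + 1) *
          (stirling2 (m + 1) (i + 1) + (i + 1) * stirling2 (m + 1) (i + 2)) -
        (i ! : ℚ) ^ 2 * (stirling2 (k + 1) (i + 1) + (i + 1) * stirling2 (k + 1) (i + 2)) *
          (stirling2 (m + 1) (i + 1) + (i + 1) * stirling2 (m + 1) (i + 2))) = 1 := by
  set g : ℕ → ℚ := fun i => (i ! : ℚ) ^ 2 * stirling2 (k + 1) (i + 1) * stirling2 (m + 1) (i + 1)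
  have hg0 : g 0 = 1 := by simp [g, stirling2_eq_stirlingSecond, Nat.stirlingSecond_one_right]
  have hgN : g (min k m + 1) = 0 := by
    rcases le_total k m with h | h
    · simp [g, stirling2_eq_zero_of_lt (show k + 1 < min k m + 1 + 1 by omega)]
    · simp [g, stirling2_eq_zero_of_lt (show m + 1 < min k m + 1 + 1 by omega)]
  calc _ = ∑ i ∈ range (min k m + 1), (g i - g (i + 1)) := by
        -- `((i+1)!)² = (i+1)² (i!)²` collapses the three cross terms to `g i - g (i+1)`
        refine Finset.sum_congr rfl fun i _ => ?_
        simp only [g, Nat.factorial_succ]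
        push_cast
        ring
    _ = 1 := by rw [Finset.sum_range_sub', hg0, hgN, sub_zero]

theorem stirlingProductSum_binomial_identity (k m : ℕ) :
    ∑ a ∈ range (k + 1), (k.choose a : ℚ) * stirlingProductSum a m
      + ∑ b ∈ range (m + 1), (m.choose b : ℚ) * stirlingProductSum k b
      - ∑ b ∈ range (m + 1), (m.choose b : ℚ) *
          ∑ a ∈ range (k + 1), (k.choose a : ℚ) * stirlingProductSum a b = 1 := by
  set N := min k m + 1
  have hx : ∀ b ≤ m, ∑ a ∈ range (k + 1), (k.choose a : ℚ) * stirlingProductSum a b =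
      ∑ i ∈ range N, ((i ! : ℚ) ^ 2 * stirling2 (b + 1) (i + 1)) *
        (stirling2 (k + 1) (i + 1) + (i + 1) * stirling2 (k + 1) (i + 2)) := by
    intro b hb
    rw [← sum_choose_mul_sum_mul_stirling2]
    refine Finset.sum_congr rfl fun a ha => ?_
    rw [stirlingProductSum_eq_sum_range (N := N) (by rw [mem_range] at ha; omega)]
    exact congrArg _ (Finset.sum_congr rfl fun i _ => by ring)
  have hy : ∀ a ≤ k, ∑ b ∈ range (m + 1), (m.choose b : ℚ) * stirlingProductSum a b =
      ∑ i ∈ range N, ((i ! : ℚ) ^ 2 * stirling2 (a + 1) (i + 1)) *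
        (stirling2 (m + 1) (i + 1) + (i + 1) * stirling2 (m + 1) (i + 2)) := by
    intro a ha
    rw [← sum_choose_mul_sum_mul_stirling2]
    refine Finset.sum_congr rfl fun b hb => ?_
    rw [stirlingProductSum_eq_sum_range (N := N) (by rw [mem_range] at hb; omega)]
  have hxy : ∑ b ∈ range (m + 1), (m.choose b : ℚ) *
        ∑ a ∈ range (k + 1), (k.choose a : ℚ) * stirlingProductSum a b =
      ∑ i ∈ range N, ((i ! : ℚ) ^ 2 *
        (stirling2 (k + 1) (i + 1) + (i + 1) * stirling2 (k + 1) (i + 2))) *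
          (stirling2 (m + 1) (i + 1) + (i + 1) * stirling2 (m + 1) (i + 2)) := by
    rw [← sum_choose_mul_sum_mul_stirling2]
    refine Finset.sum_congr rfl fun b hb => ?_
    rw [hx b (by rw [mem_range] at hb; omega)]
    exact congrArg _ (Finset.sum_congr rfl fun i _ => by ring)
  rw [hx m le_rfl, hy k le_rfl, hxy, ← Finset.sum_add_distrib, ← Finset.sum_sub_distrib]
  exact sum_range_stirling_telescope k m

/-- The exponential bivariate generating function identity
`Σ_{k,m} (Σ_i (i!)² S_{k+1,i+1} S_{m+1,i+1}) xᵏ yᵐ / (k! m!) = e^{x+y} / (eˣ + eʸ - e^{x+y})`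
in `ℚ[[x,y]]`, where `d 0` is the exponent of `x` and `d 1` the exponent of `y`. -/
theorem generating_function_identity :
    (fun d : Fin 2 →₀ ℕ =>
        (∑ i ∈ Finset.range (min (d 0) (d 1) + 1),
          (Nat.factorial i : ℚ) ^ 2 * (stirling2 (d 0 + 1) (i + 1) : ℚ) *
            (stirling2 (d 1 + 1) (i + 1) : ℚ)) /
          ((Nat.factorial (d 0) : ℚ) * (Nat.factorial (d 1) : ℚ)) : MvPowerSeries (Fin 2) ℚ) =
      expXY * (expX + expY - expXY)⁻¹ := by
  have hunit : constantCoeff (expX + expY - expXY) ≠ 0 := by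
    rw [← coeff_zero_eq_constantCoeff_apply, expX_eq_egf₂, expY_eq_egf₂, expXY_eq_egf₂, map_sub,
      map_add]
    norm_num
  change egf₂ stirlingProductSum = _
  rw [MvPowerSeries.eq_mul_inv_iff_mul_eq hunit, ← expX_mul_expY, mul_sub, mul_add, ← mul_assoc,
    egf₂_mul_expX, egf₂_mul_expY, egf₂_mul_expY, expX_mul_expY, expXY_eq_egf₂]
  ext d
  simp only [map_add, map_sub, coeff_egf₂, ← add_div, ← sub_div, stirlingProductSum_binomial_identity]
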